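/- Let ι₁, ι₂, ι₃ be types. Define, for x : ι₁ → ℝ, the extension x̂ : Option ι₁ → ℝ by x̂(some i) = x(i) and x̂(none) = 1 (appending the constant 1), and similarly ŷ, ẑ for y : ι₂ → ℝ and z : ι₃ → ℝ. Then the fusion map F : (ι₁ → ℝ) × (ι₂ → ℝ) × (ι₃ → ℝ) → ((Option ι₁ × Option ι₂ × Option ι₃) → ℝ) given by F(x, y, z)(i, j, k) = x̂(i) · ŷ(j) · ẑ(k) is injective. -/
import Mathlib


/-- Appending a constant `1` entry to each of three real vectors and taking their outer
(Kronecker) product yields an injective fusion map. -/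
theorem fusion_with_appended_one_injective (ι₁ ι₂ ι₃ : Type*) :
    Function.Injective
      (fun p : (ι₁ → ℝ) × (ι₂ → ℝ) × (ι₃ → ℝ) =>
        fun q : Option ι₁ × Option ι₂ × Option ι₃ =>
          (q.1.elim 1 p.1) * (q.2.1.elim 1 p.2.1) * (q.2.2.elim 1 p.2.2)) := by
  intro a b h
  refine Prod.ext ?_ (Prod.ext ?_ ?_)
  · funext i; simpa using congrFun h (some i, none, none)
  · funext j; simpa using congrFun h (none, some j, none)
  · funext k; simpa using congrFun h (none, none, some k)
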